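/- (Team setup, Theorem 1.) Suppose π0, π1 > 0, (C10 − C00)·(C01 − C11) > 0, ζ = sgn(C01 − C11), and τ = π0·(C10 − C00)/(π1·(C01 − C11)) (so 0 < τ < ∞). Then for every d > 0 the derivative of r at d equals −(1/√(2π))·exp(−(ln τ)²/(2d²))·exp(−d²/8)·√(π0·π1·(C10 − C00)·(C01 − C11)), which is strictly negative; consequently r is strictly decreasing on (0, ∞), so for every d_max > 0 the unique minimizer of r over (0, d_max] is d_max. -/

import Mathlib

/-!
Since `Q' = -φ` with `φ` the standard normal density, the chain rule gives two terms, and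
`φ(ζ (±L/d + d/2)) = φ₀(d) e^{∓L/2}` with `L = ln τ` and
`φ₀(d) = (2π)^{-1/2} e^{-L²/(2d²)} e^{-d²/8}`. As `e^L = τ` is the ratio of the two cost weights
`B = π0 (C10 - C00)` and `C = π1 (C01 - C11)`, and `ζ` is their common sign, the weights
`ζ B e^{-L/2}` and `ζ C e^{L/2}` both equal `√(BC)`, so the `±L/d²` parts of the inner
derivatives cancel and `r'(d) = -φ₀(d) √(BC) < 0`.
-/

/-- The Gaussian Q-function `Q(x) = (1/√(2π)) ∫_x^∞ exp(−t²/2) dt`. -/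
noncomputable def gaussQ (x : ℝ) : ℝ :=
  (Real.sqrt (2 * Real.pi))⁻¹ * ∫ t in Set.Ioi x, Real.exp (-(t ^ 2 / 2))

open Real Set MeasureTheory

namespace Real

lemma abs_mul_sqrt_div (b c : ℝ) : |c| * √(b / c) = √(b * c) := by
  rcases eq_or_ne c 0 with rfl | hc
  · simp
  have : b / c = b * c / c ^ 2 := by field_simp
  rw [this, sqrt_div' _ (sq_nonneg c), sqrt_sq_eq_abs]
  field_simp

lemma exp_log_div_two_eq_sqrt {x : ℝ} (hx : 0 < x) : exp (log x / 2) = √x := by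
  rw [sqrt_eq_rpow, rpow_def_of_pos hx]
  ring_nf

lemma sign_mul_eq_abs_of_mul_pos {b z : ℝ} (h : 0 < b * z) : sign z * b = |b| := by
  rcases lt_or_gt_of_ne (right_ne_zero_of_mul h.ne') with hz | hz
  · rw [sign_of_neg hz, abs_of_neg (neg_of_mul_pos_left h hz.le)]; ring
  · rw [sign_of_pos hz, abs_of_pos (pos_of_mul_pos_left h hz.le)]; ring

lemma sq_sign_of_ne_zero {x : ℝ} (hx : x ≠ 0) : sign x ^ 2 = 1 := by
  rcases sign_apply_eq_of_ne_zero x hx with h | h <;> rw [h] <;> norm_num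

end Real

lemma hasDerivAt_integral_Ioi {f : ℝ → ℝ} (hf : Continuous f) (hint : Integrable f) (x : ℝ) :
    HasDerivAt (fun y => ∫ t in Ioi y, f t) (-f x) x := by
  have hsplit : ∀ y, ∫ t in Ioi y, f t = (∫ t in y..0, f t) + ∫ t in Ioi 0, f t := fun y =>
    (intervalIntegral.integral_interval_add_Ioi hint.integrableOn hint.integrableOn).symm
  rw [funext hsplit]
  exact (intervalIntegral.integral_hasDerivAt_left (hf.intervalIntegrable _ _)
    (hf.stronglyMeasurableAtFilter _ _) hf.continuousAt).add_const _

lemma integrable_exp_neg_sq_div_two : Integrable fun t : ℝ => exp (-(t ^ 2 / 2)) := by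
  convert integrable_exp_neg_mul_sq (by norm_num : (0 : ℝ) < 1 / 2) using 3 with t
  ring

lemma hasDerivAt_gaussQ (x : ℝ) :
    HasDerivAt gaussQ (-((√(2 * π))⁻¹ * exp (-(x ^ 2 / 2)))) x := by
  have := (hasDerivAt_integral_Ioi (by fun_prop) integrable_exp_neg_sq_div_two x).const_mul
    (√(2 * π))⁻¹
  rwa [mul_neg] at this

lemma exp_neg_sq_mul_div_add_half {ζ : ℝ} (hζ : ζ ^ 2 = 1) (a : ℝ) {d : ℝ} (hd : d ≠ 0) :
    exp (-((ζ * (a / d + d / 2)) ^ 2 / 2))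
      = exp (-a ^ 2 / (2 * d ^ 2)) * exp (-d ^ 2 / 8) * exp (-(a / 2)) := by
  rw [← exp_add, ← exp_add, mul_pow, hζ]
  congr 1
  field_simp
  ring

lemma hasDerivAt_gaussQ_mul_div_add_half {ζ : ℝ} (hζ : ζ ^ 2 = 1) (a : ℝ) {d : ℝ} (hd : d ≠ 0) :
    HasDerivAt (fun d => gaussQ (ζ * (a / d + d / 2)))
      (-(√(2 * π))⁻¹ * exp (-a ^ 2 / (2 * d ^ 2)) * exp (-d ^ 2 / 8)
        * (ζ * exp (-(a / 2)) * (1 / 2 - a / d ^ 2))) d := by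
  have hinner : HasDerivAt (fun d => ζ * (a / d + d / 2)) (ζ * (1 / 2 - a / d ^ 2)) d := by
    have := (((hasDerivAt_inv hd).const_mul a).add ((hasDerivAt_id d).div_const 2)).const_mul ζ
    exact this.congr_deriv (by ring)
  refine ((hasDerivAt_gaussQ _).comp d hinner).congr_deriv ?_
  rw [exp_neg_sq_mul_div_add_half hζ a hd]
  ring

lemma hasDerivAt_balanced_gaussQ_sum {ζ b c L w d : ℝ} (p : ℝ) (hζ : ζ ^ 2 = 1) (hd : d ≠ 0)
    (hb : ζ * b * exp (-(L / 2)) = w) (hc : ζ * c * exp (L / 2) = w) :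
    HasDerivAt (fun d => p + b * gaussQ (ζ * (L / d + d / 2)) + c * gaussQ (ζ * (-L / d + d / 2)))
      (-(√(2 * π))⁻¹ * exp (-L ^ 2 / (2 * d ^ 2)) * exp (-d ^ 2 / 8) * w) d := by
  have := ((hasDerivAt_const d p).add
    ((hasDerivAt_gaussQ_mul_div_add_half hζ L hd).const_mul b)).add
    ((hasDerivAt_gaussQ_mul_div_add_half hζ (-L) hd).const_mul c)
  refine this.congr_deriv ?_
  rw [neg_sq L, neg_div (2 : ℝ) L, neg_neg]
  linear_combination (-(√(2 * π))⁻¹ * exp (-L ^ 2 / (2 * d ^ 2)) * exp (-d ^ 2 / 8)) *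
    ((1 / 2 - L / d ^ 2) * hb + (1 / 2 + L / d ^ 2) * hc)

lemma sign_mul_mul_exp_half_log_div {b c z : ℝ} (hb : 0 < b * z) (hc : 0 < c * z) :
    Real.sign z * b * exp (-(log (b / c) / 2)) = √(b * c) ∧
      Real.sign z * c * exp (log (b / c) / 2) = √(b * c) := by
  have hbc : 0 < b / c := by
    have := div_pos hb hc
    rwa [mul_div_mul_right _ _ (right_ne_zero_of_mul hc.ne')] at this
  rw [← neg_div, ← log_inv, inv_div, exp_log_div_two_eq_sqrt (inv_div b c ▸ inv_pos.mpr hbc),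
    exp_log_div_two_eq_sqrt hbc, sign_mul_eq_abs_of_mul_pos hb, sign_mul_eq_abs_of_mul_pos hc,
    abs_mul_sqrt_div, abs_mul_sqrt_div, mul_comm c]
  exact ⟨rfl, rfl⟩

/-- Team setup (Theorem 1): with identical costs and priors the common Bayes risk
is strictly decreasing in the normalized distance `d`, so the unique minimizer
over `(0, d_max]` is `d_max`. -/
theorem stmt_6 (π0 π1 C00 C01 C10 C11 τ ζ : ℝ)
    (hπ0 : 0 < π0) (hπ1 : 0 < π1)
    (hC : (C10 - C00) * (C01 - C11) > 0)
    (hζ : ζ = Real.sign (C01 - C11))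
    (hτ : τ = π0 * (C10 - C00) / (π1 * (C01 - C11)))
    (r : ℝ → ℝ)
    (hr : r = fun d : ℝ => π0 * C00 + π1 * C11
        + π0 * (C10 - C00) * gaussQ (ζ * (Real.log τ / d + d / 2))
        + π1 * (C01 - C11) * gaussQ (ζ * (-Real.log τ / d + d / 2))) :
    (∀ d : ℝ, 0 < d →
      HasDerivAt r
        (-(Real.sqrt (2 * Real.pi))⁻¹
          * Real.exp (-(Real.log τ) ^ 2 / (2 * d ^ 2)) * Real.exp (-d ^ 2 / 8)
          * Real.sqrt (π0 * π1 * (C10 - C00) * (C01 - C11))) d ∧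
      -(Real.sqrt (2 * Real.pi))⁻¹
          * Real.exp (-(Real.log τ) ^ 2 / (2 * d ^ 2)) * Real.exp (-d ^ 2 / 8)
          * Real.sqrt (π0 * π1 * (C10 - C00) * (C01 - C11)) < 0) ∧
    StrictAntiOn r (Set.Ioi (0 : ℝ)) ∧
    (∀ dmax : ℝ, 0 < dmax → ∀ d ∈ Set.Ioc (0 : ℝ) dmax,
      r dmax ≤ r d ∧ (d ≠ dmax → r dmax < r d)) := by
  have hz : C01 - C11 ≠ 0 := right_ne_zero_of_mul hC.ne'
  have hS : π0 * π1 * (C10 - C00) * (C01 - C11) = π0 * (C10 - C00) * (π1 * (C01 - C11)) := by ring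
  have hb : 0 < π0 * (C10 - C00) * (C01 - C11) := by rw [mul_assoc]; exact mul_pos hπ0 hC
  have hc : 0 < π1 * (C01 - C11) * (C01 - C11) := by
    rw [mul_assoc]; exact mul_pos hπ1 (mul_self_pos.mpr hz)
  obtain ⟨hwB, hwC⟩ := sign_mul_mul_exp_half_log_div hb hc
  have hderiv : ∀ d : ℝ, 0 < d → HasDerivAt r
      (-(√(2 * π))⁻¹ * exp (-(log τ) ^ 2 / (2 * d ^ 2)) * exp (-d ^ 2 / 8)
        * √(π0 * π1 * (C10 - C00) * (C01 - C11))) d := fun d hd => by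
    subst hr hζ hτ
    rw [hS]
    exact hasDerivAt_balanced_gaussQ_sum _ (sq_sign_of_ne_zero hz) hd.ne' hwB hwC
  have hneg : ∀ d : ℝ, 0 < d → -(√(2 * π))⁻¹ * exp (-(log τ) ^ 2 / (2 * d ^ 2)) * exp (-d ^ 2 / 8)
      * √(π0 * π1 * (C10 - C00) * (C01 - C11)) < 0 := fun d _ => by
    have hsqrt : 0 < √(π0 * π1 * (C10 - C00) * (C01 - C11)) :=
      sqrt_pos.mpr (by rw [mul_assoc]; exact mul_pos (mul_pos hπ0 hπ1) hC)
    have := pi_pos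
    simp only [neg_mul, neg_lt_zero]
    exact mul_pos (by positivity) hsqrt
  have hanti : StrictAntiOn r (Ioi 0) :=
    strictAntiOn_of_deriv_neg (convex_Ioi 0) (HasDerivAt.continuousOn hderiv) fun d hd => by
      rw [interior_Ioi] at hd
      exact (hderiv d hd).deriv ▸ hneg d hd
  exact ⟨fun d hd => ⟨hderiv d hd, hneg d hd⟩, hanti, fun dmax hdmax d ⟨hd, hle⟩ =>
    ⟨hanti.antitoneOn hd hdmax hle, fun hne => hanti hd hdmax (hle.lt_of_ne hne)⟩⟩
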